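/- arXiv:1410.4908 — 7 statements merged into one kernel-verified Lean document; each statement's English description precedes it below -/
import Mathlib

section
/- For two consecutive fractions p/q < p'/q' in the Farey sequence of order Q with q' > q, the angle θ at the center O = (p/q, 1/(2q²)) between the vertical ray from O down to (p/q, 0) and the segment from O to the tangency point of the two Ford circles satisfies tan θ = 2qq'/(q'² - q²). -/
/-!
The Ford circles at `p/q` and `p'/q'` have radii `r = 1/(2q²)` and `r' = 1/(2q'²)` and are
tangent, so `|OO'| = r + r'`, while `O' - O` drops by `r - r'` vertically. Hence
`cos θ = (r - r')/(r + r') = (q'² - q²)/(q'² + q²)`, and the half-angle formula turns this into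
`tan θ = 2qq'/(q'² - q²)`.
-/

open Real

theorem div_sub_div_eq_one_div_mul_of_mul_eq_add_one {p p' a b : ℝ} (ha : a ≠ 0) (hb : b ≠ 0)
    (h : p' * a = p * b + 1) : p' / b - p / a = 1 / (a * b) := by
  field_simp
  linear_combination h

theorem ford_center_dist_eq_add_radii {a b : ℝ} (ha : a ≠ 0) (hb : b ≠ 0) :
    √((1 / (a * b)) ^ 2 + (1 / (2 * b ^ 2) - 1 / (2 * a ^ 2)) ^ 2)
      = 1 / (2 * a ^ 2) + 1 / (2 * b ^ 2) := by
  -- `(r + r')² - (r - r')² = 4 r r' = (1/(ab))²`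
  have hsq : (1 / (a * b)) ^ 2 + (1 / (2 * b ^ 2) - 1 / (2 * a ^ 2)) ^ 2
      = (1 / (2 * a ^ 2) + 1 / (2 * b ^ 2)) ^ 2 := by
    field_simp
    ring
  rw [hsq, sqrt_sq (by positivity)]

theorem tan_arccos_sq_sub_sq_div_sq_add_sq {a b : ℝ} (hab : 0 ≤ a * b) :
    tan (arccos ((b ^ 2 - a ^ 2) / (b ^ 2 + a ^ 2))) = 2 * a * b / (b ^ 2 - a ^ 2) := by
  rcases eq_or_ne (b ^ 2 + a ^ 2) 0 with hs | hs
  · obtain rfl : a = 0 := by nlinarith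
    obtain rfl : b = 0 := by nlinarith
    simp
  have hsin : 1 - ((b ^ 2 - a ^ 2) / (b ^ 2 + a ^ 2)) ^ 2 = (2 * a * b / (b ^ 2 + a ^ 2)) ^ 2 := by
    field_simp
    ring
  have hpos : 0 ≤ 2 * a * b / (b ^ 2 + a ^ 2) := div_nonneg (by linarith) (by positivity)
  rw [tan_arccos, hsin, sqrt_sq hpos, div_div_div_cancel_right₀ hs]

theorem ford_circles_euclidean_angle_general (p q p' q' : ℕ)
    (hq : 0 < q) (hq' : 0 < q')
    (hdet : p' * q = p * q' + 1) :
    ∀ v₁ v₂ θ : ℝ,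
      v₁ = (p' : ℝ) / q' - (p : ℝ) / q →
      v₂ = 1 / (2 * (q' : ℝ) ^ 2) - 1 / (2 * (q : ℝ) ^ 2) →
      θ = Real.arccos ((0 * v₁ + (-1) * v₂) / Real.sqrt (v₁ ^ 2 + v₂ ^ 2)) →
      Real.tan θ = 2 * (q : ℝ) * q' / ((q' : ℝ) ^ 2 - (q : ℝ) ^ 2) := by
  rintro v₁ v₂ θ rfl rfl rfl
  have hq0 : (q : ℝ) ≠ 0 := by positivity
  have hq'0 : (q' : ℝ) ≠ 0 := by positivity
  have hdetR : (p' : ℝ) * q = p * q' + 1 := by exact_mod_cast hdet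
  rw [div_sub_div_eq_one_div_mul_of_mul_eq_add_one hq0 hq'0 hdetR,
    ford_center_dist_eq_add_radii hq0 hq'0]
  have hcos : (0 * (1 / ((q : ℝ) * q')) + (-1) * (1 / (2 * (q' : ℝ) ^ 2) - 1 / (2 * (q : ℝ) ^ 2)))
      / (1 / (2 * (q : ℝ) ^ 2) + 1 / (2 * (q' : ℝ) ^ 2))
      = ((q' : ℝ) ^ 2 - (q : ℝ) ^ 2) / ((q' : ℝ) ^ 2 + (q : ℝ) ^ 2) := by
    field_simp
    ring
  rw [hcos, tan_arccos_sq_sub_sq_div_sq_add_sq (by positivity)]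

/-- For consecutive Farey fractions `p/q < p'/q'` of order `Q` with `q' > q`, the angle `θ`
at the center `O = (p/q, 1/(2q²))` between the downward vertical direction `(0,-1)` and the
direction from `O` to the tangency point of the two Ford circles (which points toward the
other center `O' = (p'/q', 1/(2q'²))`) satisfies `tan θ = 2qq'/(q'² - q²)`.
Here `θ = arccos (⟪(0,-1), O' - O⟫ / ‖O' - O‖)`. -/
theorem ford_circles_euclidean_angle (Q p q p' q' : ℕ)
    (hq : 0 < q) (hq' : 0 < q') (hqQ : q ≤ Q) (hq'Q : q' ≤ Q)
    (hcop : Nat.gcd p q = 1) (hcop' : Nat.gcd p' q' = 1)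
    (hdet : p' * q = p * q' + 1) (hqlt : q < q') :
    ∀ v₁ v₂ θ : ℝ,
      v₁ = (p' : ℝ) / q' - (p : ℝ) / q →
      v₂ = 1 / (2 * (q' : ℝ) ^ 2) - 1 / (2 * (q : ℝ) ^ 2) →
      θ = Real.arccos ((0 * v₁ + (-1) * v₂) / Real.sqrt (v₁ ^ 2 + v₂ ^ 2)) →
      Real.tan θ = 2 * (q : ℝ) * q' / ((q' : ℝ) ^ 2 - (q : ℝ) ^ 2) :=
  ford_circles_euclidean_angle_general p q p' q' hq hq' hdet
end

section
/- Let T : Ω → Ω be the BCZ map T(x,y) = (y, -x + ⌊(1+x)/y⌋ y) on Ω = {(x,y) ∈ (0,1]² : x + y > 1}. If p_j/q_j, p_{j+1}/q_{j+1}, p_{j+2}/q_{j+2} are three consecutive fractions in the Farey sequence of order Q, then T(q_j/Q, q_{j+1}/Q) = (q_{j+1}/Q, q_{j+2}/Q). -/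
/-- The BCZ map `T(x,y) = (y, -x + ⌊(1+x)/y⌋ y)`. -/
noncomputable def bczMap (z : ℝ × ℝ) : ℝ × ℝ :=
  (z.2, -z.1 + (⌊(1 + z.1) / z.2⌋ : ℝ) * z.2)

/-!
Consecutive Farey fractions `p₁/q₁ < p₂/q₂` of order `Q` satisfy `p₂ q₁ - p₁ q₂ = 1` and
`Q < q₁ + q₂`. For the first, shift a Bézout solution so that `q₁ c - p₁ d = 1` with
`Q - q₁ < d ≤ Q`; any fraction strictly between `p₁/q₁` and `c/d` has denominator at least
`q₁ + d > Q`, so `c/d` is the successor `p₂/q₂`. For the second, if `q₁ + q₂ ≤ Q` the mediant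
would lie strictly between them.

For three consecutive fractions the two determinant identities give
`p₂ (q₁ + q₃) = (p₁ + p₃) q₂`, so `q₁ + q₃ = k q₂`, and `q₃ ≤ Q < q₂ + q₃` forces
`k = ⌊(Q + q₁) / q₂⌋`, the integer appearing in the BCZ map.
-/

theorem natCast_div_lt_natCast_div_iff {a b c d : ℕ} (hb : 0 < b) (hd : 0 < d) :
    (a : ℚ) / b < c / d ↔ a * d < c * b := by
  rw [div_lt_div_iff₀ (by positivity) (by positivity)]
  exact_mod_cast Iff.rfl

theorem Nat.coprime_of_mul_eq_mul_add_one {p q c d : ℕ} (h : q * c = p * d + 1) :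
    Nat.Coprime c d := by
  have hc : c.gcd d ∣ p * d + 1 := h ▸ dvd_mul_of_dvd_right (c.gcd_dvd_left d) q
  exact Nat.dvd_one.mp ((Nat.dvd_add_right (dvd_mul_of_dvd_right (c.gcd_dvd_right d) p)).mp hc)

theorem add_le_of_lt_of_lt_of_mul_eq_mul_add_one {p q c d a b : ℕ} (hdet : q * c = p * d + 1)
    (h₁ : p * b < a * q) (h₂ : a * d < c * b) : q + d ≤ b := by
  have hb : (b : ℤ) = q * (c * b - a * d) + d * (a * q - p * b) := by
    linear_combination (-b : ℤ) * (by exact_mod_cast hdet : (q : ℤ) * c = p * d + 1)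
  have h₁' : (p : ℤ) * b + 1 ≤ a * q := by exact_mod_cast h₁
  have h₂' : (a : ℤ) * d + 1 ≤ c * b := by exact_mod_cast h₂
  zify
  nlinarith

theorem exists_mul_eq_mul_add_one_of_coprime {p q : ℕ} (hq : 0 < q) (hpq : Nat.Coprime p q)
    (Q : ℕ) (hqQ : q ≤ Q) : ∃ c d : ℕ, q * c = p * d + 1 ∧ Q < q + d ∧ d ≤ Q := by
  obtain ⟨u, v, huv⟩ := Nat.isCoprime_iff_coprime.mpr hpq
  set t := ((Q : ℤ) + u) / q
  have hdiv := Int.mul_ediv_add_emod ((Q : ℤ) + u) q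
  have hr0 : 0 ≤ ((Q : ℤ) + u) % q := Int.emod_nonneg _ (by positivity)
  have hr1 : ((Q : ℤ) + u) % q < q := Int.emod_lt_of_pos _ (by positivity)
  have hd₀ : 0 ≤ -u + q * t := by linarith
  have hc₀ : 0 ≤ v + p * t := by nlinarith
  lift -u + q * t to ℕ using hd₀ with d hd
  lift v + p * t to ℕ using hc₀ with c hc
  refine ⟨c, d, ?_, ?_, ?_⟩
  · have : (q : ℤ) * c = p * d + 1 := by rw [hc, hd]; linear_combination huv
    exact_mod_cast this
  · have : (Q : ℤ) < q + d := by linarith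
    exact_mod_cast this
  · have : (d : ℤ) ≤ Q := by linarith
    exact_mod_cast this

def NoFareyBetween (Q : ℕ) (x y : ℚ) : Prop :=
  ∀ a b : ℕ, 0 < b → b ≤ Q → a ≤ b → Nat.gcd a b = 1 → ¬ (x < a / b ∧ a / b < y)

namespace NoFareyBetween

variable {Q p₁ q₁ p₂ q₂ : ℕ}

theorem mul_eq_mul_add_one (hgap : NoFareyBetween Q (p₁ / q₁) (p₂ / q₂))
    (hq₁ : 0 < q₁) (hq₂ : 0 < q₂) (hq₁Q : q₁ ≤ Q) (hq₂Q : q₂ ≤ Q) (hp₂ : p₂ ≤ q₂)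
    (hcop₁ : Nat.Coprime p₁ q₁) (hcop₂ : Nat.Coprime p₂ q₂)
    (hlt : (p₁ : ℚ) / q₁ < p₂ / q₂) : p₂ * q₁ = p₁ * q₂ + 1 := by
  rw [natCast_div_lt_natCast_div_iff hq₁ hq₂] at hlt
  obtain ⟨c, d, hdet, hQd, hdQ⟩ := exists_mul_eq_mul_add_one_of_coprime hq₁ hcop₁ Q hq₁Q
  have hd : 0 < d := by omega
  have hc_le : c * q₂ ≤ p₂ * d := by
    by_contra! h
    have := add_le_of_lt_of_lt_of_mul_eq_mul_add_one hdet (by linarith) h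
    omega
  have hcd : c ≤ d := by nlinarith
  have hle : p₂ * d ≤ c * q₂ := by
    have h₁ : (p₁ : ℚ) / q₁ < c / d := by
      rw [natCast_div_lt_natCast_div_iff hq₁ hd]; linarith
    have := hgap c d hd hdQ hcd (Nat.coprime_of_mul_eq_mul_add_one hdet)
    rw [natCast_div_lt_natCast_div_iff hd hq₂] at this
    exact not_lt.mp fun h₂ => this ⟨h₁, h₂⟩
  have heq : c * q₂ = p₂ * d := le_antisymm hc_le hle
  have hdq : d * (p₂ * q₁ - p₁ * q₂ : ℤ) = q₂ := by
    linear_combination (q₂ : ℤ) * (by exact_mod_cast hdet : (q₁ : ℤ) * c = p₁ * d + 1) -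
      q₁ * (by exact_mod_cast heq : (c : ℤ) * q₂ = p₂ * d)
  have hq₂d : q₂ ≤ d :=
    Nat.le_of_dvd hd <| hcop₂.symm.dvd_of_dvd_mul_left ⟨c, by linarith [heq]⟩
  zify at hlt hq₂d ⊢
  nlinarith

theorem lt_add (hgap : NoFareyBetween Q (p₁ / q₁) (p₂ / q₂))
    (hq₁ : 0 < q₁) (hq₂ : 0 < q₂) (hp₁ : p₁ ≤ q₁) (hp₂ : p₂ ≤ q₂)
    (hdet : p₂ * q₁ = p₁ * q₂ + 1) : Q < q₁ + q₂ := by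
  by_contra! hQ
  refine hgap (p₁ + p₂) (q₁ + q₂) (by omega) hQ (by omega)
    (Nat.coprime_of_mul_eq_mul_add_one (p := p₁) (q := q₁) (by linarith)) ⟨?_, ?_⟩
  · rw [natCast_div_lt_natCast_div_iff hq₁ (by omega)]; nlinarith
  · rw [natCast_div_lt_natCast_div_iff (by omega) hq₂]; nlinarith

end NoFareyBetween

theorem add_eq_div_mul_of_mul_eq_mul_add_one {Q p₁ q₁ p₂ q₂ p₃ q₃ : ℕ}
    (hcop₂ : Nat.Coprime p₂ q₂) (h₁₂ : p₂ * q₁ = p₁ * q₂ + 1) (h₂₃ : p₃ * q₂ = p₂ * q₃ + 1)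
    (hq₃Q : q₃ ≤ Q) (hQ : Q < q₂ + q₃) : q₁ + q₃ = (Q + q₁) / q₂ * q₂ := by
  obtain ⟨k, hk⟩ : q₂ ∣ q₁ + q₃ :=
    hcop₂.symm.dvd_of_dvd_mul_right ⟨p₁ + p₃, by linarith⟩
  rw [hk, Nat.div_eq_of_lt_le (k := k) (by linarith) (by linarith), mul_comm]

theorem bczMap_natCast_div {Q : ℕ} (hQ : 0 < Q) (a b : ℕ) :
    bczMap ((a : ℝ) / Q, (b : ℝ) / Q) = ((b : ℝ) / Q, (((Q + a) / b * b : ℕ) - a : ℝ) / Q) := by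
  have hfloor : ⌊(1 + (a : ℝ) / Q) / (b / Q)⌋ = ((Q + a) / b : ℕ) := by
    rw [← Nat.floor_div_eq_div (K := ℝ), Int.natCast_floor_eq_floor (by positivity), Nat.cast_add,
      one_add_div (by positivity), div_div_div_cancel_right₀ (by positivity)]
  simp only [bczMap, hfloor, Int.cast_natCast, Nat.cast_mul]
  congr 1
  ring

theorem bcz_map_farey_general (Q p₁ q₁ p₂ q₂ p₃ q₃ : ℕ)
    (hQ : 0 < Q)
    (hq₁ : 0 < q₁) (hq₂ : 0 < q₂) (hq₃ : 0 < q₃)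
    (hq₁Q : q₁ ≤ Q) (hq₂Q : q₂ ≤ Q) (hq₃Q : q₃ ≤ Q)
    (hp₂ : p₂ ≤ q₂) (hp₃ : p₃ ≤ q₃)
    (hcop₁ : Nat.gcd p₁ q₁ = 1) (hcop₂ : Nat.gcd p₂ q₂ = 1) (hcop₃ : Nat.gcd p₃ q₃ = 1)
    (hlt₁ : (p₁ : ℚ) / q₁ < (p₂ : ℚ) / q₂) (hlt₂ : (p₂ : ℚ) / q₂ < (p₃ : ℚ) / q₃)
    (hconsec₁ : ∀ a b : ℕ, 0 < b → b ≤ Q → a ≤ b → Nat.gcd a b = 1 →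
      ¬ ((p₁ : ℚ) / q₁ < (a : ℚ) / b ∧ (a : ℚ) / b < (p₂ : ℚ) / q₂))
    (hconsec₂ : ∀ a b : ℕ, 0 < b → b ≤ Q → a ≤ b → Nat.gcd a b = 1 →
      ¬ ((p₂ : ℚ) / q₂ < (a : ℚ) / b ∧ (a : ℚ) / b < (p₃ : ℚ) / q₃)) :
    bczMap ((q₁ : ℝ) / Q, (q₂ : ℝ) / Q) = ((q₂ : ℝ) / Q, (q₃ : ℝ) / Q) := by
  have h₁₂ : p₂ * q₁ = p₁ * q₂ + 1 :=
    NoFareyBetween.mul_eq_mul_add_one hconsec₁ hq₁ hq₂ hq₁Q hq₂Q hp₂ hcop₁ hcop₂ hlt₁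
  have h₂₃ : p₃ * q₂ = p₂ * q₃ + 1 :=
    NoFareyBetween.mul_eq_mul_add_one hconsec₂ hq₂ hq₃ hq₂Q hq₃Q hp₃ hcop₂ hcop₃ hlt₂
  have hQ₂₃ : Q < q₂ + q₃ := NoFareyBetween.lt_add hconsec₂ hq₂ hq₃ hp₂ hp₃ h₂₃
  have hnext : q₁ + q₃ = (Q + q₁) / q₂ * q₂ :=
    add_eq_div_mul_of_mul_eq_mul_add_one hcop₂ h₁₂ h₂₃ hq₃Q hQ₂₃
  rw [bczMap_natCast_div hQ, ← hnext, Nat.cast_add, add_sub_cancel_left]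

/-- If `p₁/q₁ < p₂/q₂ < p₃/q₃` are three consecutive fractions in the Farey sequence of
order `Q`, then the BCZ map sends `(q₁/Q, q₂/Q)` to `(q₂/Q, q₃/Q)`. -/
theorem bcz_map_farey (Q p₁ q₁ p₂ q₂ p₃ q₃ : ℕ)
    (hQ : 0 < Q)
    (hq₁ : 0 < q₁) (hq₂ : 0 < q₂) (hq₃ : 0 < q₃)
    (hq₁Q : q₁ ≤ Q) (hq₂Q : q₂ ≤ Q) (hq₃Q : q₃ ≤ Q)
    (hp₁ : p₁ ≤ q₁) (hp₂ : p₂ ≤ q₂) (hp₃ : p₃ ≤ q₃)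
    (hcop₁ : Nat.gcd p₁ q₁ = 1) (hcop₂ : Nat.gcd p₂ q₂ = 1) (hcop₃ : Nat.gcd p₃ q₃ = 1)
    (hlt₁ : (p₁ : ℚ) / q₁ < (p₂ : ℚ) / q₂) (hlt₂ : (p₂ : ℚ) / q₂ < (p₃ : ℚ) / q₃)
    (hconsec₁ : ∀ a b : ℕ, 0 < b → b ≤ Q → a ≤ b → Nat.gcd a b = 1 →
      ¬ ((p₁ : ℚ) / q₁ < (a : ℚ) / b ∧ (a : ℚ) / b < (p₂ : ℚ) / q₂))
    (hconsec₂ : ∀ a b : ℕ, 0 < b → b ≤ Q → a ≤ b → Nat.gcd a b = 1 →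
      ¬ ((p₂ : ℚ) / q₂ < (a : ℚ) / b ∧ (a : ℚ) / b < (p₃ : ℚ) / q₃)) :
    bczMap ((q₁ : ℝ) / Q, (q₂ : ℝ) / Q) = ((q₂ : ℝ) / Q, (q₃ : ℝ) / Q) :=
  bcz_map_farey_general Q p₁ q₁ p₂ q₂ p₃ q₃ hQ hq₁ hq₂ hq₃ hq₁Q hq₂Q hq₃Q hp₂ hp₃ hcop₁ hcop₂ hcop₃
    hlt₁ hlt₂ hconsec₁ hconsec₂
end

section
/- The BCZ map T(x,y) = (y, -x + ⌊(1+x)/y⌋ y) maps the triangle Ω = {(x,y) ∈ (0,1]² : x + y > 1} into itself. -/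
/-- The Farey triangle `Ω = {(x,y) ∈ (0,1]² : x + y > 1}`. -/
def fareyTriangle : Set (ℝ × ℝ) :=
  {z | 0 < z.1 ∧ z.1 ≤ 1 ∧ 0 < z.2 ∧ z.2 ≤ 1 ∧ 1 < z.1 + z.2}

/-- The second coordinate of `T(x,y)` is `1 - r`, where `r ∈ [0, y)` is the remainder of
`1 + x` modulo `y`. -/
theorem bczMap_snd_mem_Ioc {z : ℝ × ℝ} (hy : 0 < z.2) : (bczMap z).2 ∈ Set.Ioc (1 - z.2) 1 := by
  have hrem_nonneg := Int.sub_floor_div_mul_nonneg (1 + z.1) hy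
  have hrem_lt := Int.sub_floor_div_mul_lt (1 + z.1) hy
  constructor <;> simp only [bczMap] <;> linarith

/-- The BCZ map sends the triangle `Ω` into itself. -/
theorem bcz_maps_triangle_to_itself :
    ∀ z ∈ fareyTriangle, bczMap z ∈ fareyTriangle := by
  rintro z ⟨-, -, hy0, hy1, -⟩
  obtain ⟨hlow, hup⟩ := bczMap_snd_mem_Ioc hy0
  exact ⟨hy0, hy1, by linarith, hup, show 1 < z.2 + _ by linarith⟩
end

section
/- For the geometric statistic F(x,y) = (1/2)(y/x + x/y) on Ω = {(x,y) ∈ (0,1]² : x + y > 1}, and for every t > 1, the Lebesgue probability measure m (with dm = 2 dx dy) of the set {(x,y) ∈ Ω : F(x,y) ≥ t} equals 2 / ( (t + √(t²−1)) (t + √(t²−1) + 1) ). -/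
/-!
Put `l = t + √(t² - 1)`, so that `l + l⁻¹ = 2t`. For positive `x, y` the inequality
`(y/x + x/y)/2 ≥ t` factors as `(l y - x)(y - l x) ≥ 0`, i.e. `y ≥ l x` or `x ≥ l y`. The tail set
is therefore the union of the triangle `{y ≥ l x}` at the cusp `(0, 1)` of `Ω` and its mirror image
under `(x, y) ↦ (y, x)`. Integrating the vertical sections, the triangle has area
`1 / (2 l (l + 1))`, so the tail has `m`-measure `2 · 2 · 1 / (2 l (l + 1)) = 2 / (l (l + 1))`.
-/

open MeasureTheory

open Set

/-- For `l > 0`, the triangle with vertices `(0, 1)`, `(1 / (l + 1), l / (l + 1))` and `(1 / l, 1)`;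
for `l ≥ 1` it is the part of `Ω` on or above the line `y = l x`. -/
def cuspTriangle (l : ℝ) : Set (ℝ × ℝ) :=
  {z | 0 < z.1 ∧ z.2 ≤ 1 ∧ 1 < z.1 + z.2 ∧ l * z.1 ≤ z.2}

lemma measurableSet_cuspTriangle (l : ℝ) : MeasurableSet (cuspTriangle l) :=
  (measurableSet_lt measurable_const measurable_fst).inter <|
    (measurableSet_le measurable_snd measurable_const).inter <|
    (measurableSet_lt measurable_const (measurable_fst.add measurable_snd)).inter <|
    measurableSet_le (measurable_fst.const_mul l) measurable_snd

lemma volume_Ioc_inter_Ici (a b c : ℝ) :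
    volume (Ioc a c ∩ Ici b) = ENNReal.ofReal (c - max a b) := by
  rw [measure_congr ((ae_eq_refl _).inter Ioi_ae_eq_Ici.symm), Ioc_inter_Ioi, Real.volume_Ioc]

lemma volume_prodMk_preimage_cuspTriangle (l x : ℝ) :
    volume (Prod.mk x ⁻¹' cuspTriangle l) = ENNReal.ofReal (min x (1 - l * x)) := by
  rcases le_or_gt x 0 with hx | hx
  · have hempty : Prod.mk x ⁻¹' cuspTriangle l = ∅ :=
      eq_empty_of_forall_notMem fun y hy => hx.not_gt hy.1
    rw [hempty, measure_empty, eq_comm, ENNReal.ofReal_eq_zero]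
    exact (min_le_left _ _).trans hx
  · have hsection : Prod.mk x ⁻¹' cuspTriangle l = Ioc (1 - x) 1 ∩ Ici (l * x) := by
      ext y
      simp only [cuspTriangle, mem_preimage, mem_ofPred_eq, mem_inter_iff, mem_Ioc, mem_Ici]
      constructor
      · rintro ⟨-, hy1, hxy, hly⟩; exact ⟨⟨by linarith, hy1⟩, hly⟩
      · rintro ⟨⟨hxy, hy1⟩, hly⟩; exact ⟨hx, hy1, by linarith, hly⟩
    rw [hsection, volume_Ioc_inter_Ici, ← min_sub_sub_left, sub_sub_cancel]

lemma integral_min_id_one_sub_mul {l : ℝ} (hl : 0 < l) :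
    ∫ x in (0 : ℝ)..1 / l, min x (1 - l * x) = 1 / (2 * l * (l + 1)) := by
  set c := 1 / (l + 1)
  have hc : 0 ≤ c := by positivity
  have hcl : c ≤ 1 / l := one_div_le_one_div_of_le hl (by linarith)
  have hcont : Continuous fun x : ℝ => min x (1 - l * x) := by fun_prop
  rw [← intervalIntegral.integral_add_adjacent_intervals (hcont.intervalIntegrable 0 c)
    (hcont.intervalIntegrable c (1 / l))]
  have hleft : ∫ x in (0 : ℝ)..c, min x (1 - l * x) = ∫ x in (0 : ℝ)..c, x := by
    refine intervalIntegral.integral_congr fun x hx => min_eq_left ?_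
    rw [uIcc_of_le hc] at hx
    have := (le_div_iff₀ (by linarith : 0 < l + 1)).1 hx.2
    linarith
  have hright : ∫ x in c..1 / l, min x (1 - l * x) = ∫ x in c..1 / l, (1 - l * x) := by
    refine intervalIntegral.integral_congr fun x hx => min_eq_right ?_
    rw [uIcc_of_le hcl] at hx
    have := (div_le_iff₀ (by linarith : 0 < l + 1)).1 hx.1
    linarith
  have hderiv : ∀ x ∈ uIcc c (1 / l), HasDerivAt (fun x => x - l * x ^ 2 / 2) (1 - l * x) x :=
    fun x _ =>
    ((hasDerivAt_id' x).fun_sub (((hasDerivAt_pow 2 x).const_mul l).div_const 2)).congr_deriv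
      (by ring)
  rw [hleft, hright, integral_id, intervalIntegral.integral_eq_sub_of_hasDerivAt hderiv
    ((by fun_prop : Continuous fun x : ℝ => 1 - l * x).intervalIntegrable _ _)]
  simp only [c]
  field_simp
  ring

lemma volume_cuspTriangle {l : ℝ} (hl : 0 < l) :
    volume (cuspTriangle l) = ENNReal.ofReal (1 / (2 * l * (l + 1))) := by
  have hsupport : (fun x => ENNReal.ofReal (min x (1 - l * x))).support ⊆ Ioc 0 (1 / l) := by
    intro x hx
    have hpos : 0 < min x (1 - l * x) := ENNReal.ofReal_pos.1 (pos_iff_ne_zero.2 hx)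
    have hlx : l * x < 1 := by linarith [min_le_right x (1 - l * x)]
    exact ⟨hpos.trans_le (min_le_left _ _), (le_div_iff₀' hl).2 hlx.le⟩
  have hnonneg : 0 ≤ᵐ[volume.restrict (Ioc 0 (1 / l))] fun x => min x (1 - l * x) := by
    filter_upwards [ae_restrict_mem measurableSet_Ioc] with x hx
    exact le_min hx.1.le (sub_nonneg.2 ((le_div_iff₀' hl).1 hx.2))
  rw [Measure.volume_eq_prod, Measure.prod_apply (measurableSet_cuspTriangle l)]
  simp_rw [volume_prodMk_preimage_cuspTriangle]
  rw [← setLIntegral_eq_of_support_subset hsupport, ← ofReal_integral_eq_lintegral_ofReal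
    (by fun_prop : Continuous fun x : ℝ => min x (1 - l * x)).integrableOn_Ioc hnonneg,
    ← intervalIntegral.integral_of_le (by positivity), integral_min_id_one_sub_mul hl]

lemma le_half_div_add_div_iff {t l x y : ℝ} (hl : 1 ≤ l) (htl : l + l⁻¹ = 2 * t)
    (hx : 0 < x) (hy : 0 < y) :
    t ≤ 1 / 2 * (y / x + x / y) ↔ l * x ≤ y ∨ l * y ≤ x := by
  have hl0 : 0 < l := by linarith
  -- `l` and `l⁻¹` are the roots of `X² - 2tX + 1`, so the condition factors
  have hfactor : 1 / 2 * (y / x + x / y) - t = (l * y - x) * (y - l * x) / (2 * l * (x * y)) := by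
    rw [show t = (l + l⁻¹) / 2 by linarith]
    field_simp
    ring
  rw [← sub_nonneg, hfactor, le_div_iff₀ (by positivity), zero_mul]
  constructor
  · intro h
    by_contra! hneither
    nlinarith [mul_neg_of_pos_of_neg (sub_pos.2 hneither.2) (sub_neg.2 hneither.1)]
  · rintro (h | h)
    · exact mul_nonneg (by nlinarith) (sub_nonneg.2 h)
    · exact mul_nonneg_of_nonpos_of_nonpos (sub_nonpos.2 h) (by nlinarith)

lemma fareyTriangle_sep_tail_eq {t l : ℝ} (hl : 1 ≤ l) (htl : l + l⁻¹ = 2 * t) :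
    {z ∈ fareyTriangle | 1 / 2 * (z.2 / z.1 + z.1 / z.2) ≥ t}
      = cuspTriangle l ∪ Prod.swap ⁻¹' cuspTriangle l := by
  ext ⟨x, y⟩
  simp only [fareyTriangle, cuspTriangle, mem_union, mem_preimage, Prod.fst_swap,
    Prod.snd_swap, mem_ofPred_eq, ge_iff_le]
  constructor
  · rintro ⟨⟨hx, hx1, hy, hy1, hxy⟩, htail⟩
    rcases (le_half_div_add_div_iff hl htl hx hy).1 htail with h | h
    · exact Or.inl ⟨hx, hy1, hxy, h⟩
    · exact Or.inr ⟨hy, hx1, by linarith, h⟩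
  · rintro (⟨hx, hy1, hxy, h⟩ | ⟨hy, hx1, hxy, h⟩)
    · have hy : 0 < y := by nlinarith
      exact ⟨⟨hx, by nlinarith, hy, hy1, hxy⟩, (le_half_div_add_div_iff hl htl hx hy).2 (Or.inl h)⟩
    · have hx : 0 < x := by nlinarith
      exact ⟨⟨hx, hx1, hy, by nlinarith, by linarith⟩,
        (le_half_div_add_div_iff hl htl hx hy).2 (Or.inr h)⟩

lemma disjoint_cuspTriangle_preimage_swap {l : ℝ} (hl : 1 < l) :
    Disjoint (cuspTriangle l) (Prod.swap ⁻¹' cuspTriangle l) := by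
  rw [disjoint_left]
  rintro ⟨x, y⟩ ⟨hx, -, -, hxy⟩ ⟨-, -, -, hyx : l * y ≤ x⟩
  dsimp only at hx hxy
  have hy : 0 < y := by nlinarith
  nlinarith [mul_pos (sub_pos.2 hl) hx, mul_pos (sub_pos.2 hl) hy]

lemma volume_preimage_swap {α : Type*} [MeasureSpace α] [SFinite (volume : Measure α)]
    (s : Set (α × α)) : volume (Prod.swap ⁻¹' s) = volume s := by
  rw [Measure.volume_eq_prod]
  exact Measure.measurePreserving_swap.measure_preimage_emb
    MeasurableEquiv.prodComm.measurableEmbedding s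

lemma add_sqrt_sq_sub_one_add_inv {t : ℝ} (ht : 1 ≤ t) :
    t + √(t ^ 2 - 1) + (t + √(t ^ 2 - 1))⁻¹ = 2 * t := by
  have hsq := Real.sq_sqrt (by nlinarith : 0 ≤ t ^ 2 - 1)
  rw [inv_eq_of_mul_eq_one_right (b := t - √(t ^ 2 - 1)) (by nlinarith)]
  ring

/-- For the hyperbolic-distance statistic `F(x,y) = (1/2)(y/x + x/y)` on `Ω`, with the
probability measure `dm = 2 dx dy`, for every `t > 1` the measure of
`{F ≥ t}` equals `2 / ((t + √(t²-1))(t + √(t²-1) + 1))`. -/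
theorem hyperbolic_statistic_tail_exact (t : ℝ) (ht : 1 < t) :
    2 * (volume {z ∈ fareyTriangle |
        (1 / 2) * (z.2 / z.1 + z.1 / z.2) ≥ t}).toReal
      = 2 / ((t + Real.sqrt (t ^ 2 - 1)) * (t + Real.sqrt (t ^ 2 - 1) + 1)) := by
  set l := t + √(t ^ 2 - 1)
  have hl : 1 < l := by linarith [Real.sqrt_nonneg (t ^ 2 - 1)]
  rw [fareyTriangle_sep_tail_eq hl.le (add_sqrt_sq_sub_one_add_inv ht.le),
    measure_union (disjoint_cuspTriangle_preimage_swap hl)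
      ((measurableSet_cuspTriangle l).preimage measurable_swap),
    volume_preimage_swap, volume_cuspTriangle (by linarith),
    ENNReal.toReal_add ENNReal.ofReal_ne_top ENNReal.ofReal_ne_top,
    ENNReal.toReal_ofReal (by positivity)]
  field_simp
  ring
end

section
/- For F(x,y) = 1/(2x²) + 1/(2y²) on Ω = {(x,y) ∈ (0,1]² : x+y > 1} with the probability measure dm = 2 dx dy, the tail function G_F(t) = m({(x,y) ∈ Ω : F(x,y) ≥ t}) satisfies G_F(t) ~ 1/t as t → ∞, i.e., lim_{t→∞} t · G_F(t) = 1. -/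
/-!
Near the corner `(0, 1)` of `Ω` the term `1/(2y²)` is at most `1`, so for large `t` the set
`{F ≥ t}` lies between the corner triangles `{0 < x ≤ a, 1 - x < y ≤ 1}` (and their mirror images
at `(1, 0)`) with `a = 1/√(2t)` and `a = 1/√(2(t-1))`. A corner triangle of leg `a` has area
`a²/2`, so `1/t ≤ G_F(t) ≤ 1/(t-1)`.
-/

open MeasureTheory

open Set Filter

section RegionBetween

variable {α : Type*} [MeasurableSpace α] {μ : Measure α} {f g : α → ℝ} {s : Set α}

theorem volume_region_between_oc_eq_volume_regionBetween (hf : Measurable f)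
    (hg : Measurable g) (hs : MeasurableSet s) :
    μ.prod volume {p : α × ℝ | p.1 ∈ s ∧ p.2 ∈ Ioc (f p.1) (g p.1)} =
      μ.prod volume (regionBetween f g s) := by
  rw [Measure.prod_apply (measurableSet_region_between_oc hf hg hs),
    Measure.prod_apply (measurableSet_regionBetween hf hg hs)]
  congr 1 with x
  by_cases hx : x ∈ s
  · have hfiber (I : ℝ → ℝ → Set ℝ) :
        Prod.mk x ⁻¹' {p : α × ℝ | p.1 ∈ s ∧ p.2 ∈ I (f p.1) (g p.1)} = I (f x) (g x) := by
      ext; simp [hx]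
    rw [regionBetween, hfiber Ioc, hfiber Ioo, Real.volume_Ioc, Real.volume_Ioo]
  · simp [regionBetween, hx]

end RegionBetween

def cornerTriangle (a : ℝ) : Set (ℝ × ℝ) :=
  {z | z.1 ∈ Ioc 0 a ∧ z.2 ∈ Ioc (1 - z.1) 1}

theorem measurableSet_cornerTriangle (a : ℝ) : MeasurableSet (cornerTriangle a) :=
  measurableSet_region_between_oc (by fun_prop) measurable_const measurableSet_Ioc

theorem volume_cornerTriangle {a : ℝ} (ha : 0 ≤ a) :
    volume (cornerTriangle a) = ENNReal.ofReal (a ^ 2 / 2) := by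
  rw [Measure.volume_eq_prod, cornerTriangle,
    volume_region_between_oc_eq_volume_regionBetween (g := fun _ ↦ 1) (by fun_prop)
      measurable_const measurableSet_Ioc,
    volume_regionBetween_eq_integral (by fun_prop : Continuous fun x : ℝ ↦ 1 - x).integrableOn_Ioc
      continuous_const.integrableOn_Ioc measurableSet_Ioc
      (fun x hx ↦ by linarith [hx.1]),
    ← intervalIntegral.integral_of_le ha]
  simp

theorem volume_cornerTriangle_union_swap {a : ℝ} (ha₀ : 0 ≤ a) (ha : a ≤ 1 / 2) :
    volume (cornerTriangle a ∪ Prod.swap ⁻¹' cornerTriangle a) = ENNReal.ofReal (a ^ 2) := by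
  have hdisj : Disjoint (cornerTriangle a) (Prod.swap ⁻¹' cornerTriangle a) :=
    disjoint_left.2 fun z ⟨⟨_, hx⟩, hy, _⟩ ⟨⟨_, hy'⟩, _⟩ ↦ by
      simp only [Prod.fst_swap] at hy'
      linarith
  rw [measure_union hdisj ((measurableSet_cornerTriangle a).preimage measurable_swap),
    Measure.volume_eq_prod, (Measure.measurePreserving_swap).measure_preimage
      (measurableSet_cornerTriangle a).nullMeasurableSet, ← Measure.volume_eq_prod,
    volume_cornerTriangle ha₀, ← ENNReal.ofReal_add (by positivity) (by positivity)]
  ring_nf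

def euclideanTail (t : ℝ) : Set (ℝ × ℝ) :=
  {z ∈ fareyTriangle | 1 / (2 * z.1 ^ 2) + 1 / (2 * z.2 ^ 2) ≥ t}

theorem swap_mem_euclideanTail {t : ℝ} {z : ℝ × ℝ} :
    z.swap ∈ euclideanTail t ↔ z ∈ euclideanTail t := by
  simp only [euclideanTail, fareyTriangle, mem_ofPred_eq, Prod.fst_swap, Prod.snd_swap]
  constructor <;> rintro ⟨⟨h₁, h₂, h₃, h₄, h₅⟩, h₆⟩ <;>
    exact ⟨⟨h₃, h₄, h₁, h₂, by linarith⟩, by linarith⟩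

theorem cornerTriangle_subset_euclideanTail {a t : ℝ} (ha : a ≤ 1 / 2)
    (hat : 2 * t * a ^ 2 ≤ 1) : cornerTriangle a ⊆ euclideanTail t := by
  rintro ⟨x, y⟩ ⟨⟨hx₀, hxa⟩, hy, hy₁⟩
  simp only at hx₀ hxa hy hy₁
  refine ⟨⟨hx₀, by linarith, by linarith, hy₁, by linarith⟩, ?_⟩
  have htx : t ≤ 1 / (2 * x ^ 2) := by
    rw [le_div_iff₀ (by positivity)]
    rcases le_or_gt t 0 with ht | ht
    · nlinarith
    · nlinarith [mul_le_mul hxa hxa hx₀.le (hx₀.le.trans hxa)]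
  have : 0 ≤ 1 / (2 * y ^ 2) := by positivity
  linarith

/-- For `x ≤ y`, a large statistic forces `x ≤ 1/4`, hence `y ≥ 3/4`; then the `y`-term is at
most `1`, so `1/(2x²) ≥ t - 1`. -/
theorem mem_cornerTriangle_of_mem_euclideanTail {a t : ℝ} {z : ℝ × ℝ} (ht : 16 ≤ t)
    (hat : 1 ≤ 2 * (t - 1) * a ^ 2) (ha : 0 ≤ a) (hz : z ∈ euclideanTail t)
    (hle : z.1 ≤ z.2) : z ∈ cornerTriangle a := by
  obtain ⟨x, y⟩ := z
  obtain ⟨⟨hx₀, -, hy₀, hy₁, hxy⟩, hF⟩ := hz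
  simp only at hle hF hxy hy₁ hy₀ hx₀ ⊢
  have hyx : 1 / (2 * y ^ 2) ≤ 1 / (2 * x ^ 2) := by gcongr
  have hx : x ≤ 1 / 4 := by
    have : t ≤ 2 * (1 / (2 * x ^ 2)) := by linarith
    rw [show 2 * (1 / (2 * x ^ 2)) = 1 / x ^ 2 by field_simp, le_div_iff₀ (by positivity)] at this
    nlinarith
  have hy : 1 / (2 * y ^ 2) ≤ 1 := by
    rw [div_le_one (by positivity)]
    nlinarith
  have hxt : 2 * (t - 1) * x ^ 2 ≤ 1 := by
    have : t - 1 ≤ 1 / (2 * x ^ 2) := by linarith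
    rw [le_div_iff₀ (by positivity)] at this
    linarith
  refine ⟨⟨hx₀, ?_⟩, by simp only; linarith, hy₁⟩
  nlinarith

theorem euclideanTail_subset_cornerTriangle_union_swap {a t : ℝ} (ht : 16 ≤ t)
    (hat : 1 ≤ 2 * (t - 1) * a ^ 2) (ha : 0 ≤ a) :
    euclideanTail t ⊆ cornerTriangle a ∪ Prod.swap ⁻¹' cornerTriangle a := by
  intro z hz
  rcases le_total z.1 z.2 with hle | hle
  · exact Or.inl (mem_cornerTriangle_of_mem_euclideanTail ht hat ha hz hle)
  · exact Or.inr (mem_cornerTriangle_of_mem_euclideanTail ht hat ha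
      (swap_mem_euclideanTail.2 hz) hle)

theorem ofReal_le_volume_euclideanTail {t : ℝ} (ht : 2 ≤ t) :
    ENNReal.ofReal (1 / (2 * t)) ≤ volume (euclideanTail t) := by
  set a := √(1 / (2 * t))
  have ha₀ : 0 ≤ a := Real.sqrt_nonneg _
  have ha_sq : a ^ 2 = 1 / (2 * t) := Real.sq_sqrt (by positivity)
  have ha : a ≤ 1 / 2 := by
    have : a ^ 2 ≤ 1 / 4 := by rw [ha_sq, div_le_div_iff₀ (by positivity) (by norm_num)]; linarith
    nlinarith
  have hat : 2 * t * a ^ 2 ≤ 1 := by rw [ha_sq, mul_one_div_cancel (by positivity)]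
  calc ENNReal.ofReal (1 / (2 * t))
      = volume (cornerTriangle a ∪ Prod.swap ⁻¹' cornerTriangle a) := by
        rw [volume_cornerTriangle_union_swap ha₀ ha, ha_sq]
    _ ≤ volume (euclideanTail t) := by
        refine measure_mono (union_subset (cornerTriangle_subset_euclideanTail ha hat) ?_)
        exact fun z hz ↦ swap_mem_euclideanTail.1 (cornerTriangle_subset_euclideanTail ha hat hz)

theorem volume_euclideanTail_le {t : ℝ} (ht : 16 ≤ t) :
    volume (euclideanTail t) ≤ ENNReal.ofReal (1 / (2 * (t - 1))) := by
  set a := √(1 / (2 * (t - 1)))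
  have ha₀ : 0 ≤ a := Real.sqrt_nonneg _
  have ha_sq : a ^ 2 = 1 / (2 * (t - 1)) := Real.sq_sqrt (by rw [one_div_nonneg]; linarith)
  have ha : a ≤ 1 / 2 := by
    have : a ^ 2 ≤ 1 / 4 := by rw [ha_sq, div_le_div_iff₀ (by linarith) (by norm_num)]; linarith
    nlinarith
  have hat : 1 ≤ 2 * (t - 1) * a ^ 2 := by
    rw [ha_sq, mul_one_div_cancel (by linarith : (0 : ℝ) < 2 * (t - 1)).ne']
  calc volume (euclideanTail t)
      ≤ volume (cornerTriangle a ∪ Prod.swap ⁻¹' cornerTriangle a) :=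
        measure_mono (euclideanTail_subset_cornerTriangle_union_swap ht hat ha₀)
    _ = ENNReal.ofReal (1 / (2 * (t - 1))) := by
        rw [volume_cornerTriangle_union_swap ha₀ ha, ha_sq]

/-- For the Euclidean-distance statistic `F(x,y) = 1/(2x²) + 1/(2y²)` on `Ω` with
`dm = 2 dx dy`, the tail `G_F(t) = m({F ≥ t})` satisfies `G_F(t) ~ 1/t`,
i.e. `t·G_F(t) → 1`. -/
theorem euclidean_statistic_tail_asymptotic :
    Filter.Tendsto
      (fun t : ℝ => t *
        (2 * (volume {z ∈ fareyTriangle |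
          1 / (2 * z.1 ^ 2) + 1 / (2 * z.2 ^ 2) ≥ t}).toReal))
      Filter.atTop (nhds 1) := by
  change Tendsto (fun t ↦ t * (2 * (volume (euclideanTail t)).toReal)) atTop (nhds 1)
  have hlim : Tendsto (fun t : ℝ ↦ (1 - t⁻¹)⁻¹) atTop (nhds 1) := by
    simpa using (tendsto_const_nhds.sub tendsto_inv_atTop_zero).inv₀
      (by norm_num : (1 : ℝ) - 0 ≠ 0)
  refine tendsto_of_tendsto_of_tendsto_of_le_of_le' tendsto_const_nhds hlim ?_ ?_ <;>
    filter_upwards [eventually_ge_atTop 16] with t ht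
  · have hfin : volume (euclideanTail t) ≠ ⊤ :=
      ne_top_of_le_ne_top ENNReal.ofReal_ne_top (volume_euclideanTail_le ht)
    have hlower := (ENNReal.ofReal_le_iff_le_toReal hfin).1
      (ofReal_le_volume_euclideanTail (by linarith))
    calc (1 : ℝ) = t * (2 * (1 / (2 * t))) := by field_simp
      _ ≤ _ := by gcongr
  · have hupper := ENNReal.toReal_le_of_le_ofReal (by rw [one_div_nonneg]; linarith)
      (volume_euclideanTail_le ht)
    calc t * (2 * (volume (euclideanTail t)).toReal)
        ≤ t * (2 * (1 / (2 * (t - 1)))) := by gcongr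
      _ = (1 - t⁻¹)⁻¹ := by field_simp
end

section
/- For F(x,y) = (1/2)(x/y − y/x) on Ω = {(x,y) ∈ (0,1]² : x+y > 1} with probability measure dm = 2 dx dy, the tail function G_F(t) = m({(x,y) ∈ Ω : F(x,y) ≥ t}) satisfies G_F(t) ≍ 1/t² as t → ∞; that is, there exist constants 0 < c₁ ≤ c₂ and t₀ such that c₁/t² ≤ G_F(t) ≤ c₂/t² for all t > t₀. -/
/-!
On `Ω` we have `x ≤ 1`, so `F(x, y) ≥ t` forces `1 / y ≥ x / y ≥ 2t`, i.e. `y ≤ 1 / (2t)`, and then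
`x > 1 - y ≥ 1 - 1 / (2t)`: the tail set lies in a square of side `1 / (2t)` at the corner `(1, 0)`.
Conversely, near that corner `y / x ≤ 1` and `x / y ≥ 1 / (2y)`, so a square of side `1 / (18t)`
placed just above the diagonal `x + y = 1` lies in the tail set. Both squares have area `≍ 1 / t²`.
-/

open MeasureTheory

open Set

def slopeTail (t : ℝ) : Set (ℝ × ℝ) :=
  {z ∈ fareyTriangle | (1 / 2) * (z.1 / z.2 - z.2 / z.1) ≥ t}

lemma le_one_div_two_mul_of_le_slope {x y t : ℝ} (hx₀ : 0 < x) (hx₁ : x ≤ 1) (hy : 0 < y)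
    (ht : 0 < t) (h : t ≤ (1 / 2) * (x / y - y / x)) : y ≤ 1 / (2 * t) := by
  have hxy : x / y ≤ 1 / y := div_le_div_of_nonneg_right hx₁ hy.le
  have hyx : 0 < y / x := div_pos hy hx₀
  rw [le_div_iff₀ (by positivity), mul_comm]
  exact (le_div_iff₀ hy).mp (by linarith)

lemma le_slope_of_le_one_div_six_mul {x y t : ℝ} (ht : 1 ≤ t) (hx : 1 / 2 ≤ x) (hy : 0 < y)
    (hyx : y ≤ x) (hyt : y ≤ 1 / (6 * t)) : t ≤ (1 / 2) * (x / y - y / x) := by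
  have hyx' : y / x ≤ 1 := div_le_one_of_le₀ hyx (by linarith)
  have hxy : 3 * t ≤ x / y := by
    rw [le_div_iff₀ hy]
    rw [le_div_iff₀ (by positivity)] at hyt
    linarith
  linarith

lemma slopeTail_subset_corner {t : ℝ} (ht : 0 < t) :
    slopeTail t ⊆ Icc (1 - 1 / (2 * t)) 1 ×ˢ Icc 0 (1 / (2 * t)) := by
  rintro ⟨x, y⟩ ⟨⟨hx₀, hx₁, hy₀, -, hxy⟩, hF⟩
  have hy := le_one_div_two_mul_of_le_slope hx₀ hx₁ hy₀ ht hF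
  exact ⟨⟨by linarith, hx₁⟩, hy₀.le, hy⟩

lemma corner_subset_slopeTail {t : ℝ} (ht : 1 ≤ t) :
    Icc (1 - 1 / (18 * t)) 1 ×ˢ Icc (1 / (9 * t)) (1 / (6 * t)) ⊆ slopeTail t := by
  rintro ⟨x, y⟩ ⟨⟨hx₀, hx₁⟩, hy₀, hy₁⟩
  have hs : 1 / (6 * t) ≤ 1 / 6 := by gcongr; linarith
  have hs' : 1 / (9 * t) = 2 * (1 / (18 * t)) := by field_simp; norm_num
  have hpos : 0 < 1 / (18 * t) := by positivity
  refine ⟨⟨by linarith, hx₁, by linarith, by linarith, by linarith⟩, ?_⟩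
  exact le_slope_of_le_one_div_six_mul ht (by linarith) (by linarith) (by linarith) hy₁

lemma volume_real_Icc_prod_Icc {a b c d : ℝ} (hab : a ≤ b) (hcd : c ≤ d) :
    volume.real (Icc a b ×ˢ Icc c d) = (b - a) * (d - c) := by
  rw [Measure.volume_eq_prod, measureReal_prod_prod, Real.volume_real_Icc_of_le hab,
    Real.volume_real_Icc_of_le hcd]

/-- For the Euclidean-slope statistic `F(x,y) = (1/2)(x/y - y/x)` on `Ω` with
`dm = 2 dx dy`, the tail `G_F(t) = m({F ≥ t})` satisfies `G_F(t) ≍ 1/t²`. -/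
theorem slope_statistic_tail_order :
    ∃ c₁ c₂ t₀ : ℝ, 0 < c₁ ∧ c₁ ≤ c₂ ∧ ∀ t : ℝ, t₀ < t →
      c₁ / t ^ 2 ≤
        2 * (volume {z ∈ fareyTriangle |
          (1 / 2) * (z.1 / z.2 - z.2 / z.1) ≥ t}).toReal ∧
      2 * (volume {z ∈ fareyTriangle |
          (1 / 2) * (z.1 / z.2 - z.2 / z.1) ≥ t}).toReal ≤ c₂ / t ^ 2 := by
  refine ⟨1 / 162, 1 / 2, 1, by norm_num, by norm_num, fun t ht => ?_⟩
  have ht₀ : 0 < t := by linarith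
  have hcorner_finite : volume (Icc (1 - 1 / (2 * t)) 1 ×ˢ Icc 0 (1 / (2 * t))) ≠ ⊤ :=
    (isCompact_Icc.prod isCompact_Icc).measure_lt_top.ne
  have htail_finite : volume (slopeTail t) ≠ ⊤ :=
    ((measure_mono (slopeTail_subset_corner ht₀)).trans_lt hcorner_finite.lt_top).ne
  have hlower := measureReal_mono (corner_subset_slopeTail ht.le) htail_finite
  have hupper := measureReal_mono (slopeTail_subset_corner ht₀) hcorner_finite
  rw [volume_real_Icc_prod_Icc (sub_le_self _ (by positivity)) (by gcongr; linarith)] at hlower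
  rw [volume_real_Icc_prod_Icc (sub_le_self _ (by positivity)) (by positivity)] at hupper
  change _ ≤ 2 * volume.real (slopeTail t) ∧ 2 * volume.real (slopeTail t) ≤ _
  constructor
  · calc 1 / 162 / t ^ 2 = 2 * ((1 - (1 - 1 / (18 * t))) * (1 / (6 * t) - 1 / (9 * t))) := by
          field_simp; ring
      _ ≤ 2 * volume.real (slopeTail t) := by gcongr
  · calc 2 * volume.real (slopeTail t)
        ≤ 2 * ((1 - (1 - 1 / (2 * t))) * (1 / (2 * t) - 0)) := by gcongr
      _ = 1 / 2 / t ^ 2 := by field_simp; ring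
end

section
/- For F(x,y) = (1/4)(1/(x³y) + 1/(xy³)) on Ω = {(x,y) ∈ (0,1]² : x+y > 1} with probability measure dm = 2 dx dy, the tail function G_F(t) = m({(x,y) ∈ Ω : F(x,y) ≥ t}) satisfies G_F(t) ≍ t^{−2/3} as t → ∞; i.e., there exist constants 0 < c₁ ≤ c₂ and t₀ such that c₁ t^{−2/3} ≤ G_F(t) ≤ c₂ t^{−2/3} for all t > t₀. -/
/-!
On `Ω`, if `x ≤ y` then `y > 1/2`, so `F(x, y) ≤ 5 / (2x³)`; by symmetry `F ≥ t` forces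
`min(x, y) ≤ a` with `a³ = 5/(2t)`, which confines `{F ≥ t}` to two squares of side `a` at the
corners `(0, 1)` and `(1, 0)`. Conversely `F(x, y) ≥ 1/(4x³y)`, so the square
`(b/2, b] × (1 - b/2, 1]` with `b³ = 1/(4t)` lies in `{F ≥ t}`. Both `a²` and `b²` are
multiples of `t^(-2/3)`.
-/

open MeasureTheory Set

noncomputable def areaStatistic (z : ℝ × ℝ) : ℝ :=
  1 / 4 * (1 / (z.1 ^ 3 * z.2) + 1 / (z.1 * z.2 ^ 3))

lemma swap_mem_fareyTriangle {z : ℝ × ℝ} (hz : z ∈ fareyTriangle) :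
    z.swap ∈ fareyTriangle := by
  obtain ⟨hx0, hx1, hy0, hy1, hxy⟩ := hz
  exact ⟨hy0, hy1, hx0, hx1, by simp only [Prod.fst_swap, Prod.snd_swap]; linarith⟩

lemma areaStatistic_swap (z : ℝ × ℝ) : areaStatistic z.swap = areaStatistic z := by
  simp only [areaStatistic, Prod.fst_swap, Prod.snd_swap]
  ring

lemma areaStatistic_le_of_fst_le_snd {z : ℝ × ℝ} (hz : z ∈ fareyTriangle)
    (hle : z.1 ≤ z.2) :
    areaStatistic z ≤ 5 / (2 * z.1 ^ 3) := by
  obtain ⟨x, y⟩ := z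
  obtain ⟨hx0, hx1, hy0, hy1, hxy⟩ := hz
  dsimp only at *
  have hy : 1 / 2 < y := by linarith
  have hx3 : x ^ 3 ≤ x := pow_le_of_le_one hx0.le hx1 (by norm_num)
  have h₁ : 1 / (x ^ 3 * y) ≤ 2 / x ^ 3 := by
    rw [div_le_div_iff₀ (by positivity) (by positivity)]; nlinarith [pow_pos hx0 3]
  have h₂ : 1 / (x * y ^ 3) ≤ 8 / x ^ 3 := by
    rw [div_le_div_iff₀ (by positivity) (by positivity)]
    have hy3 : 1 / 8 < y ^ 3 := by
      nlinarith [pow_lt_pow_left₀ hy (by norm_num) (by norm_num : 3 ≠ 0)]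
    nlinarith [mul_le_mul_of_nonneg_left hx3 (by positivity : (0:ℝ) ≤ 8 * y ^ 3)]
  calc areaStatistic (x, y) ≤ 1 / 4 * (2 / x ^ 3 + 8 / x ^ 3) := by
        unfold areaStatistic; gcongr
    _ = 5 / (2 * x ^ 3) := by field_simp; ring

lemma min_le_of_le_areaStatistic {z : ℝ × ℝ} {t a : ℝ} (hz : z ∈ fareyTriangle)
    (ht : 0 < t) (ha : 0 ≤ a) (ha3 : 5 / (2 * t) ≤ a ^ 3) (hzt : t ≤ areaStatistic z) :
    min z.1 z.2 ≤ a := by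
  wlog hle : z.1 ≤ z.2 generalizing z
  · rw [min_comm]
    exact this (swap_mem_fareyTriangle hz) (by rwa [areaStatistic_swap])
      (by simp only [Prod.fst_swap, Prod.snd_swap]; linarith)
  have hx0 : 0 < z.1 := hz.1
  rw [min_eq_left hle]
  refine le_of_pow_le_pow_left₀ (by norm_num : 3 ≠ 0) ha (le_trans ?_ ha3)
  have := hzt.trans (areaStatistic_le_of_fst_le_snd hz hle)
  rw [le_div_iff₀ (by positivity)] at this
  rw [le_div_iff₀ (by positivity)]
  linarith

lemma areaStatistic_superlevel_subset {t a : ℝ} (ht : 0 < t) (ha : 0 ≤ a)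
    (ha3 : 5 / (2 * t) ≤ a ^ 3) :
    {z ∈ fareyTriangle | t ≤ areaStatistic z} ⊆
      Ioc 0 a ×ˢ Ioc (1 - a) 1 ∪ Ioc (1 - a) 1 ×ˢ Ioc 0 a := by
  rintro z ⟨hz, hzt⟩
  have ⟨hx0, hx1, hy0, hy1, hxy⟩ := hz
  rcases min_le_iff.1 (min_le_of_le_areaStatistic hz ht ha ha3 hzt) with h | h
  · exact Or.inl ⟨⟨hx0, h⟩, by linarith, hy1⟩
  · exact Or.inr ⟨⟨by linarith, hx1⟩, hy0, h⟩

lemma le_areaStatistic_of_pow_three_mul_le {x y t : ℝ} (hx : 0 < x) (hy : 0 < y)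
    (hxy : x ^ 3 * y ≤ 1 / (4 * t)) :
    t ≤ areaStatistic (x, y) := by
  have h₁ : 4 * t ≤ 1 / (x ^ 3 * y) := by
    simpa only [one_div_one_div] using one_div_le_one_div_of_le (by positivity) hxy
  have h₂ : 0 ≤ 1 / (x * y ^ 3) := by positivity
  unfold areaStatistic
  linarith

lemma subset_areaStatistic_superlevel {t b : ℝ} (hb : 0 < b) (hb1 : b ≤ 1)
    (hb3 : b ^ 3 ≤ 1 / (4 * t)) :
    Ioc (b / 2) b ×ˢ Ioc (1 - b / 2) 1 ⊆ {z ∈ fareyTriangle | t ≤ areaStatistic z} := by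
  rintro ⟨x, y⟩ ⟨⟨hx, hxb⟩, hy, hy1⟩
  have hx0 : 0 < x := by linarith
  have hy0 : 0 < y := by linarith
  refine ⟨⟨hx0, hxb.trans hb1, hy0, hy1, by dsimp only; linarith⟩,
    le_areaStatistic_of_pow_three_mul_le hx0 hy0 ?_⟩
  calc x ^ 3 * y ≤ b ^ 3 * 1 := by gcongr
    _ ≤ 1 / (4 * t) := by rwa [mul_one]

lemma volume_real_Ioc_prod_Ioc {a b c d : ℝ} (hab : a ≤ b) (hcd : c ≤ d) :
    volume.real (Ioc a b ×ˢ Ioc c d) = (b - a) * (d - c) := by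
  rw [Measure.volume_eq_prod, measureReal_prod_prod, Real.volume_real_Ioc_of_le hab,
    Real.volume_real_Ioc_of_le hcd]

lemma volume_Ioc_prod_Ioc_ne_top (a b c d : ℝ) : volume (Ioc a b ×ˢ Ioc c d) ≠ ⊤ :=
  ((Metric.isBounded_Ioc a b).prod (Metric.isBounded_Ioc c d)).measure_lt_top.ne

lemma fareyTriangle_subset_Ioc_prod_Ioc : fareyTriangle ⊆ Ioc 0 1 ×ˢ Ioc 0 1 :=
  fun _ ⟨hx0, hx1, hy0, hy1, _⟩ ↦ ⟨⟨hx0, hx1⟩, hy0, hy1⟩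

lemma volume_real_areaStatistic_superlevel_le {t a : ℝ} (ht : 0 < t) (ha : 0 ≤ a)
    (ha3 : 5 / (2 * t) ≤ a ^ 3) :
    volume.real {z ∈ fareyTriangle | t ≤ areaStatistic z} ≤ 2 * a ^ 2 := by
  calc volume.real {z ∈ fareyTriangle | t ≤ areaStatistic z}
      ≤ volume.real (Ioc 0 a ×ˢ Ioc (1 - a) 1 ∪ Ioc (1 - a) 1 ×ˢ Ioc 0 a) :=
        measureReal_mono (areaStatistic_superlevel_subset ht ha ha3)
          (measure_union_ne_top (volume_Ioc_prod_Ioc_ne_top _ _ _ _)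
            (volume_Ioc_prod_Ioc_ne_top _ _ _ _))
    _ ≤ volume.real (Ioc 0 a ×ˢ Ioc (1 - a) 1) + volume.real (Ioc (1 - a) 1 ×ˢ Ioc 0 a) :=
        measureReal_union_le _ _
    _ = 2 * a ^ 2 := by
        rw [volume_real_Ioc_prod_Ioc ha (by linarith), volume_real_Ioc_prod_Ioc (by linarith) ha]
        ring

lemma le_volume_real_areaStatistic_superlevel {t b : ℝ} (hb : 0 < b) (hb1 : b ≤ 1)
    (hb3 : b ^ 3 ≤ 1 / (4 * t)) :
    (b / 2) ^ 2 ≤ volume.real {z ∈ fareyTriangle | t ≤ areaStatistic z} := by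
  calc (b / 2) ^ 2 = volume.real (Ioc (b / 2) b ×ˢ Ioc (1 - b / 2) 1) := by
        rw [volume_real_Ioc_prod_Ioc (by linarith) (by linarith)]
        ring
    _ ≤ _ := measureReal_mono (subset_areaStatistic_superlevel hb hb1 hb3)
        (measure_ne_top_of_subset ((sep_subset _ _).trans fareyTriangle_subset_Ioc_prod_Ioc)
          (volume_Ioc_prod_Ioc_ne_top _ _ _ _))

lemma rpow_inv_three_pow_three {x : ℝ} (hx : 0 ≤ x) : (x ^ (3⁻¹ : ℝ)) ^ 3 = x := by
  simpa using Real.rpow_inv_natCast_pow hx (n := 3) (by norm_num)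

lemma rpow_inv_three_sq {c t : ℝ} (hc : 0 ≤ c) (ht : 0 ≤ t) :
    ((c / t) ^ (3⁻¹ : ℝ)) ^ 2 = c ^ (2 / 3 : ℝ) * t ^ (-(2 : ℝ) / 3) := by
  rw [← Real.rpow_natCast, ← Real.rpow_mul (by positivity), Real.div_rpow hc ht,
    div_eq_mul_inv, ← Real.rpow_neg ht]
  norm_num

/-- For the Euclidean-area statistic `F(x,y) = (1/4)(1/(x³y) + 1/(xy³))` on `Ω` with
`dm = 2 dx dy`, the tail `G_F(t) = m({F ≥ t})` satisfies `G_F(t) ≍ t^(-2/3)`. -/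
theorem area_statistic_tail_order :
    ∃ c₁ c₂ t₀ : ℝ, 0 < c₁ ∧ c₁ ≤ c₂ ∧ ∀ t : ℝ, t₀ < t →
      c₁ * t ^ (-(2 : ℝ) / 3) ≤
        2 * (volume {z ∈ fareyTriangle |
          (1 / 4) * (1 / (z.1 ^ 3 * z.2) + 1 / (z.1 * z.2 ^ 3)) ≥ t}).toReal ∧
      2 * (volume {z ∈ fareyTriangle |
          (1 / 4) * (1 / (z.1 ^ 3 * z.2) + 1 / (z.1 * z.2 ^ 3)) ≥ t}).toReal
        ≤ c₂ * t ^ (-(2 : ℝ) / 3) := by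
  refine ⟨(1 / 4) ^ (2 / 3 : ℝ) / 2, 4 * (5 / 2) ^ (2 / 3 : ℝ), 1, by positivity, ?_,
    fun t ht ↦ ?_⟩
  · have h₁ : (1 / 4 : ℝ) ^ (2 / 3 : ℝ) ≤ 1 :=
      Real.rpow_le_one (by norm_num) (by norm_num) (by norm_num)
    have h₂ : (1 : ℝ) ≤ (5 / 2) ^ (2 / 3 : ℝ) :=
      Real.one_le_rpow (by norm_num) (by norm_num)
    linarith
  have ht0 : 0 < t := by linarith
  have hb1 : (1 / 4 / t) ^ (3⁻¹ : ℝ) ≤ 1 :=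
    Real.rpow_le_one (by positivity) (by rw [div_le_one ht0]; linarith) (by norm_num)
  have hupper := volume_real_areaStatistic_superlevel_le ht0 (by positivity)
    (by rw [rpow_inv_three_pow_three (by positivity), div_div] :
      5 / (2 * t) ≤ ((5 / 2 / t) ^ (3⁻¹ : ℝ)) ^ 3)
  have hlower := le_volume_real_areaStatistic_superlevel (by positivity) hb1
    (by rw [rpow_inv_three_pow_three (by positivity), div_div])
  rw [rpow_inv_three_sq (by norm_num) ht0.le] at hupper
  rw [div_pow, rpow_inv_three_sq (by norm_num) ht0.le] at hlower
  change _ ≤ 2 * volume.real {z ∈ fareyTriangle | t ≤ areaStatistic z} ∧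
    2 * volume.real {z ∈ fareyTriangle | t ≤ areaStatistic z} ≤ _
  exact ⟨by linarith, by linarith⟩
end
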